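/- Let S and T be left restriction semigroupoids and φ: S → T a premorphism. Then there is a unique restriction morphism φ̄: Sz(S) → T with φ = φ̄ ∘ ι, where ι(s) = ({s*, s}, s); explicitly φ̄({s*, s₁, …, sₙ = s}, s) = φ(s₁)* φ(s₂)* ⋯ φ(sₙ)* φ(s). Conversely, for any restriction morphism φ̄: Sz(S) → T, the composite φ̄ ∘ ι is a premorphism. -/

import Mathlib

/-!
For a premorphism `φ` put `φ̄(A, a) = φ(s₁)* ⋯ φ(sₙ)* φ(a)` where `A = {s₁, …, sₙ}`. Every factor
`φ(sᵢ)*` is a projection below the projection `φ(a*)`, which fixes `φ(a)`; projections below a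
common projection commute and are idempotent, so the product depends only on the set `A`.
Multiplicativity: `φ(a)` is pushed through the projections of `B` using `s x* = (s x)* s` and
`φ(a) φ(z) = φ(a)* φ(az)`; the factors `φ(y)*`, `y ∈ A`, and `φ((ab)* y)*` agree after
multiplication by the projection `φ((ab)*)`, which fixes everything to their right.
Uniqueness holds because `(A, a) = ι(c₁)* ⋯ ι(cₙ)* ι(a)`, and the converse because
`ι(s) ι(t) = ι(s)* ι(st)` and `ι(s)* ι(s*) = ι(s)*` in `Sz(S)`.
-/

/-- An (Exel) semigroupoid: a partially defined associative operation. -/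
structure Sgpd (S : Type*) where
  composable : S → S → Prop
  mul : S → S → S
  assoc₁ : ∀ s t r, composable s t → composable t r →
    composable (mul s t) r ∧ composable s (mul t r) ∧ mul (mul s t) r = mul s (mul t r)
  assoc₂ : ∀ s t r, composable s t → composable (mul s t) r →
    composable t r ∧ composable s (mul t r) ∧ mul (mul s t) r = mul s (mul t r)
  assoc₃ : ∀ s t r, composable t r → composable s (mul t r) →
    composable s t ∧ composable (mul s t) r ∧ mul (mul s t) r = mul s (mul t r)

/-- A left restriction semigroupoid. -/
structure LRSgpd (S : Type*) extends Sgpd S where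
  star : S → S
  lr1 : ∀ s, composable (star s) s ∧ mul (star s) s = s
  lr2 : ∀ s t, (composable (star s) (star t) ↔ composable (star t) (star s)) ∧
    (composable (star s) (star t) → mul (star s) (star t) = mul (star t) (star s))
  lr3 : ∀ s t, composable (star s) t → star (mul (star s) t) = mul (star s) (star t)
  lr4 : ∀ s t, composable s t → mul s (star t) = mul (star (mul s t)) s

/-- The natural partial order: `s ⪯ t` iff `(s*, t)` is composable and `s* t = s`. -/
def natle {S : Type*} (L : LRSgpd S) (s t : S) : Prop :=
  L.composable (L.star s) t ∧ L.mul (L.star s) t = s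

/-- A premorphism of left restriction semigroupoids. -/
def IsPremorphism {S T : Type*} (LS : LRSgpd S) (LT : LRSgpd T) (φ : S → T) : Prop :=
  (∀ s t, LS.composable s t →
    LT.composable (φ s) (φ t) ∧ LT.composable (LT.star (φ s)) (φ (LS.mul s t)) ∧
    LT.mul (φ s) (φ t) = LT.mul (LT.star (φ s)) (φ (LS.mul s t))) ∧
  (∀ s, natle LT (LT.star (φ s)) (φ (LS.star s)))

/-- The defining condition for elements `(A, a)` of the Szendrei expansion. -/
def szCond {S : Type*} (L : LRSgpd S) (A : Finset S) (a : S) : Prop :=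
  a ∈ A ∧ L.star a ∈ A ∧ ∀ b ∈ A, L.star b = L.star a

/-- The first component `(ab)*A ∪ aB` of the Szendrei product. -/
def szSet {S : Type*} [DecidableEq S] (L : LRSgpd S) (A : Finset S) (a : S)
    (B : Finset S) (b : S) : Finset S :=
  A.image (fun x => L.mul (L.star (L.mul a b)) x) ∪ B.image (fun x => L.mul a x)

/-- A restriction morphism of left restriction semigroupoids. -/
def IsRestrMorphism {S T : Type*} (LS : LRSgpd S) (LT : LRSgpd T) (f : S → T) : Prop :=
  (∀ s t, LS.composable s t →
    LT.composable (f s) (f t) ∧ f (LS.mul s t) = LT.mul (f s) (f t)) ∧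
  (∀ s, f (LS.star s) = LT.star (f s))

namespace LRSgpd

variable {X : Type*}

section Basic

variable (L : LRSgpd X)

def IsProj (x : X) : Prop := L.star x = x

lemma composable_star_self (s : X) : L.composable (L.star s) s := (L.lr1 s).1

lemma star_mul_self (s : X) : L.mul (L.star s) s = s := (L.lr1 s).2

lemma composable_star_star (s : X) : L.composable (L.star s) (L.star s) := by
  have h : L.composable (L.star s) (L.mul (L.star s) s) := by
    rw [L.star_mul_self]; exact L.composable_star_self s
  exact (L.assoc₃ _ _ _ (L.composable_star_self s) h).1

lemma star_mul_star (s : X) : L.mul (L.star s) (L.star s) = L.star s := by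
  simpa only [L.star_mul_self] using (L.lr3 s s (L.composable_star_self s)).symm

lemma star_star (s : X) : L.star (L.star s) = L.star s := by
  have hc : L.composable (L.star s) (L.star (L.star s)) :=
    (L.lr2 s (L.star s)).1.mpr (L.composable_star_self _)
  have h := L.lr3 s (L.star s) (L.composable_star_star s)
  rw [L.star_mul_star] at h
  rw [h, (L.lr2 s (L.star s)).2 hc, L.star_mul_self]

lemma isProj_star (s : X) : L.IsProj (L.star s) := L.star_star s

lemma composable_star_right {s t : X} (h : L.composable s t) :
    L.composable s (L.star t) := by
  have h' : L.composable s (L.mul (L.star t) t) := by rwa [L.star_mul_self]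
  exact (L.assoc₃ _ _ _ (L.composable_star_self t) h').1

lemma composable_of_star_eq {a b y : X} (h : L.composable a b) (hy : L.star y = L.star b) :
    L.composable a y := by
  have hby : L.composable (L.star b) y := hy ▸ L.composable_star_self y
  have h' := (L.assoc₁ _ _ _ (L.composable_star_right h) hby).2.1
  rwa [← hy, L.star_mul_self] at h'

lemma composable_star_mul_left {s t : X} (h : L.composable s t) :
    L.composable (L.star (L.mul s t)) s :=
  (L.assoc₃ _ _ _ h (L.composable_star_self _)).1

lemma composable_star_mul_star {s t : X} (h : L.composable s t) :
    L.composable (L.star (L.mul s t)) (L.star s) := by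
  have h' : L.composable (L.star (L.mul s t)) (L.mul (L.star s) s) := by
    rw [L.star_mul_self]; exact L.composable_star_mul_left h
  exact (L.assoc₃ _ _ _ (L.composable_star_self s) h').1

lemma composable_star_mul {s t : X} (h : L.composable s t) :
    L.composable (L.star s) (L.mul s t) := by
  have h' : L.composable (L.mul (L.star s) s) t := by rwa [L.star_mul_self]
  exact (L.assoc₂ _ _ _ (L.composable_star_self s) h').2.1

lemma star_mul_mul {s t : X} (h : L.composable s t) :
    L.mul (L.star s) (L.mul s t) = L.mul s t := by
  have h' : L.composable (L.mul (L.star s) s) t := by rwa [L.star_mul_self]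
  have := (L.assoc₂ _ _ _ (L.composable_star_self s) h').2.2
  rwa [L.star_mul_self, eq_comm] at this

end Basic

namespace IsProj

variable {L : LRSgpd X} {x y : X}

lemma composable_self (hx : L.IsProj x) : L.composable x x := by
  have := L.composable_star_star x; rwa [hx] at this

lemma mul_self (hx : L.IsProj x) : L.mul x x = x := by
  have := L.star_mul_star x; rwa [hx] at this

lemma composable_comm (hx : L.IsProj x) (hy : L.IsProj y) (h : L.composable x y) :
    L.composable y x := by
  have := (L.lr2 x y).1; rw [hx, hy] at this; exact this.mp h

lemma mul_comm (hx : L.IsProj x) (hy : L.IsProj y) (h : L.composable x y) :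
    L.mul x y = L.mul y x := by
  have := (L.lr2 x y).2; rw [hx, hy] at this; exact this h

lemma star_mul (hx : L.IsProj x) (h : L.composable x y) :
    L.star (L.mul x y) = L.mul x (L.star y) := by
  have := L.lr3 x y (by rwa [hx]); rwa [hx] at this

end IsProj

lemma star_mul_star_mul (L : LRSgpd X) {s t : X} (h : L.composable s t) :
    L.mul (L.star s) (L.star (L.mul s t)) = L.star (L.mul s t) := by
  rw [← L.lr3 s _ (L.composable_star_mul h), L.star_mul_mul h]

lemma star_mul_mul_star (L : LRSgpd X) {s t : X} (h : L.composable s t) :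
    L.mul (L.star (L.mul s t)) (L.star s) = L.star (L.mul s t) := by
  rw [(L.isProj_star _).mul_comm (L.isProj_star s) (L.composable_star_mul_star h),
    L.star_mul_star_mul h]

lemma star_mul_eq_of_star_eq (L : LRSgpd X) {a b z : X} (hab : L.composable a b)
    (hz : L.star z = L.star b) : L.star (L.mul a z) = L.star (L.mul a b) := by
  have haz := L.composable_of_star_eq hab hz
  have key : L.mul (L.star (L.mul a z)) a = L.mul (L.star (L.mul a b)) a := by
    rw [← L.lr4 _ _ haz, ← L.lr4 _ _ hab, hz]
  have hstar : ∀ t, L.composable a t →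
      L.star (L.mul (L.star (L.mul a t)) a) = L.star (L.mul a t) := fun t h => by
    rw [(L.isProj_star _).star_mul (L.composable_star_mul_left h), L.star_mul_mul_star h]
  rw [← hstar z haz, key, hstar b hab]

section Below

variable (L : LRSgpd X)

def ProjBelow (e x : X) : Prop := L.IsProj x ∧ L.composable x e ∧ L.mul x e = x

def Fixes (e c : X) : Prop := L.composable e c ∧ L.mul e c = c

variable {L} {e x y c : X}

lemma IsProj.fixes_self (he : L.IsProj e) : L.Fixes e e :=
  ⟨he.composable_self, he.mul_self⟩

lemma ProjBelow.fixes (he : L.IsProj e) (hx : L.ProjBelow e x) : L.Fixes e x := by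
  have hex := hx.1.composable_comm he hx.2.1
  exact ⟨hex, by rw [he.mul_comm hx.1 hex, hx.2.2]⟩

lemma ProjBelow.composable_of_fixes (hx : L.ProjBelow e x) (hc : L.Fixes e c) :
    L.composable x c := by
  have := (L.assoc₁ _ _ _ hx.2.1 hc.1).1; rwa [hx.2.2] at this

lemma ProjBelow.composable (he : L.IsProj e) (hx : L.ProjBelow e x)
    (hy : L.ProjBelow e y) : L.composable x y :=
  hx.composable_of_fixes (hy.fixes he)

lemma ProjBelow.mul_comm (he : L.IsProj e) (hx : L.ProjBelow e x) (hy : L.ProjBelow e y) :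
    L.mul x y = L.mul y x :=
  hx.1.mul_comm hy.1 (hx.composable he hy)

lemma ProjBelow.trans {f : X} (hf : L.ProjBelow e f) (hx : L.ProjBelow f x) :
    L.ProjBelow e x := by
  have ha := L.assoc₁ _ _ _ hx.2.1 hf.2.1
  refine ⟨hx.1, by simpa only [hx.2.2] using ha.1, ?_⟩
  calc L.mul x e = L.mul (L.mul x f) e := by rw [hx.2.2]
    _ = x := by rw [ha.2.2, hf.2.2, hx.2.2]

lemma ProjBelow.fixes_mul (he : L.IsProj e) (hx : L.ProjBelow e x) (hc : L.Fixes e c) :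
    L.Fixes e (L.mul x c) := by
  have ha := L.assoc₁ _ _ _ (hx.fixes he).1 (hx.composable_of_fixes hc)
  exact ⟨ha.2.1, by rw [← ha.2.2, (hx.fixes he).2]⟩

lemma Fixes.of_projBelow {f : X} (he : L.IsProj e) (hf : L.ProjBelow e f)
    (hc : L.Fixes f c) : L.Fixes e c := by
  have ha := L.assoc₁ _ _ _ (hf.fixes he).1 hc.1
  rw [hc.2] at ha
  exact ⟨ha.2.1, by rw [← ha.2.2, (hf.fixes he).2, hc.2]⟩

lemma ProjBelow.mul_mul (he : L.IsProj e) (hx : L.ProjBelow e x) (hy : L.ProjBelow e y)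
    (hc : L.Fixes e c) : L.mul (L.mul x y) c = L.mul x (L.mul y c) :=
  (L.assoc₁ _ _ _ (hx.composable he hy) (hy.composable_of_fixes hc)).2.2

lemma ProjBelow.mul_left_comm (he : L.IsProj e) (hx : L.ProjBelow e x)
    (hy : L.ProjBelow e y) (hc : L.Fixes e c) :
    L.mul x (L.mul y c) = L.mul y (L.mul x c) := by
  rw [← hx.mul_mul he hy hc, hx.mul_comm he hy, hy.mul_mul he hx hc]

end Below

section ListMul

variable (L : LRSgpd X)

def lmul (xs : List X) (c : X) : X := xs.foldr L.mul c

@[simp] lemma lmul_nil (c : X) : L.lmul [] c = c := rfl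

@[simp] lemma lmul_cons (x : X) (xs : List X) (c : X) :
    L.lmul (x :: xs) c = L.mul x (L.lmul xs c) := rfl

lemma lmul_append (xs ys : List X) (c : X) : L.lmul (xs ++ ys) c = L.lmul xs (L.lmul ys c) :=
  List.foldr_append ..

variable {L} {e c : X} {xs ys : List X}

lemma fixes_lmul (he : L.IsProj e) (hxs : ∀ x ∈ xs, L.ProjBelow e x) (hc : L.Fixes e c) :
    L.Fixes e (L.lmul xs c) := by
  induction xs with
  | nil => exact hc
  | cons x xs ih =>
    rw [List.forall_mem_cons] at hxs
    exact hxs.1.fixes_mul he (ih hxs.2)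

lemma lmul_perm (he : L.IsProj e) (hp : xs.Perm ys) (hxs : ∀ x ∈ xs, L.ProjBelow e x)
    (hc : L.Fixes e c) : L.lmul xs c = L.lmul ys c := by
  induction hp with
  | nil => rfl
  | cons x _ ih =>
    rw [List.forall_mem_cons] at hxs
    rw [lmul_cons, lmul_cons, ih hxs.2]
  | swap x y l =>
    simp only [List.forall_mem_cons] at hxs
    exact hxs.1.mul_left_comm he hxs.2.1 (fixes_lmul he hxs.2.2 hc)
  | trans h₁ _ ih₁ ih₂ => rw [ih₁ hxs, ih₂ fun x hx => hxs x (h₁.mem_iff.mpr hx)]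

lemma mul_lmul_of_mem {x d : X} (he : L.IsProj e) (hxs : ∀ x ∈ xs, L.ProjBelow e x)
    (hd : L.Fixes e d) (hx : x ∈ xs) : L.mul x (L.lmul xs d) = L.lmul xs d := by
  classical
  have hx' := hxs x hx
  have hperm := List.perm_cons_erase hx
  have hxs' : ∀ y ∈ xs.erase x, L.ProjBelow e y :=
    fun y hy => hxs y (List.mem_of_mem_erase hy)
  rw [lmul_perm he hperm hxs hd, lmul_cons,
    ← hx'.mul_mul he hx' (fixes_lmul he hxs' hd), hx'.1.mul_self]

lemma lmul_mul_of_mem {x d : X} (he : L.IsProj e) (hxs : ∀ x ∈ xs, L.ProjBelow e x)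
    (hd : L.Fixes e d) (hx : x ∈ xs) : L.lmul xs (L.mul x d) = L.lmul xs d := by
  have hxs' : ∀ y ∈ xs ++ [x], L.ProjBelow e y := by
    simpa [or_imp, forall_and] using And.intro hxs (hxs x hx)
  calc L.lmul xs (L.mul x d) = L.lmul (xs ++ [x]) d := (L.lmul_append xs [x] d).symm
    _ = L.mul x (L.lmul xs d) := lmul_perm he (List.perm_append_singleton x xs) hxs' hd
    _ = L.lmul xs d := mul_lmul_of_mem he hxs hd hx

lemma lmul_lmul_of_subset (he : L.IsProj e) (hxs : ∀ x ∈ xs, L.ProjBelow e x)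
    (hc : L.Fixes e c) (hsub : ys ⊆ xs) : L.lmul xs (L.lmul ys c) = L.lmul xs c := by
  induction ys with
  | nil => rfl
  | cons y ys ih =>
    have hys : ∀ z ∈ ys, L.ProjBelow e z := fun z hz => hxs z (hsub (List.mem_cons_of_mem y hz))
    rw [lmul_cons, lmul_mul_of_mem he hxs (fixes_lmul he hys hc) (hsub List.mem_cons_self),
      ih (List.subset_of_cons_subset hsub)]

lemma lmul_eq_of_mem_iff (he : L.IsProj e) (hxs : ∀ x ∈ xs, L.ProjBelow e x)
    (hc : L.Fixes e c) (hxy : ∀ z, z ∈ xs ↔ z ∈ ys) : L.lmul xs c = L.lmul ys c := by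
  have hys : ∀ y ∈ ys, L.ProjBelow e y := fun y hy => hxs y ((hxy y).mpr hy)
  have happ : ∀ z ∈ xs ++ ys, L.ProjBelow e z := by
    simpa [or_imp, forall_and] using And.intro hxs hys
  calc L.lmul xs c = L.lmul xs (L.lmul ys c) :=
        (lmul_lmul_of_subset he hxs hc fun z hz => (hxy z).mpr hz).symm
    _ = L.lmul ys (L.lmul xs c) := by
      rw [← lmul_append, ← lmul_append, lmul_perm he List.perm_append_comm happ hc]
    _ = L.lmul ys c := lmul_lmul_of_subset he hys hc fun z hz => (hxy z).mp hz

lemma lmul_mul {d : X} (he : L.IsProj e) (hxs : ∀ x ∈ xs, L.ProjBelow e x)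
    (hc : L.Fixes e c) (hcd : L.composable c d) :
    L.composable (L.lmul xs c) d ∧ L.mul (L.lmul xs c) d = L.lmul xs (L.mul c d) := by
  induction xs with
  | nil => exact ⟨hcd, rfl⟩
  | cons x xs ih =>
    rw [List.forall_mem_cons] at hxs
    obtain ⟨ih₁, ih₂⟩ := ih hxs.2
    have ha := L.assoc₁ _ _ _ (hxs.1.composable_of_fixes (fixes_lmul he hxs.2 hc)) ih₁
    exact ⟨ha.1, by rw [lmul_cons, lmul_cons, ha.2.2, ih₂]⟩

lemma star_lmul (he : L.IsProj e) (hxs : ∀ x ∈ xs, L.ProjBelow e x) (hc : L.Fixes e c) :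
    L.star (L.lmul xs c) = L.lmul xs (L.star c) := by
  induction xs with
  | nil => rfl
  | cons x xs ih =>
    rw [List.forall_mem_cons] at hxs
    rw [lmul_cons, lmul_cons, hxs.1.1.star_mul
      (hxs.1.composable_of_fixes (fixes_lmul he hxs.2 hc)), ih hxs.2]

lemma fixes_lmul_of_projBelow {E : X} (he : L.IsProj e) (hE : L.ProjBelow e E)
    (hxs : ∀ x ∈ xs, L.ProjBelow e x) (hc : L.Fixes E c) : L.Fixes E (L.lmul xs c) := by
  induction xs with
  | nil => exact hc
  | cons x xs ih =>
    rw [List.forall_mem_cons] at hxs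
    have hP := fixes_lmul he hxs.2 (hc.of_projBelow he hE)
    refine ⟨hE.composable_of_fixes (hxs.1.fixes_mul he hP), ?_⟩
    rw [lmul_cons, hE.mul_left_comm he hxs.1 hP, (ih hxs.2).2]

lemma lmul_map_congr {α : Type*} {g g' : α → X} {l : List α} {E : X} (he : L.IsProj e)
    (hE : L.ProjBelow e E) (hg : ∀ z ∈ l, L.ProjBelow e (g z))
    (hg' : ∀ z ∈ l, L.ProjBelow e (g' z)) (hgg' : ∀ z ∈ l, L.mul (g z) E = L.mul (g' z) E)
    (hc : L.Fixes E c) : L.lmul (l.map g) c = L.lmul (l.map g') c := by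
  induction l with
  | nil => rfl
  | cons z l ih =>
    simp only [List.forall_mem_cons] at hg hg' hgg'
    have hP := fixes_lmul_of_projBelow he hE (List.forall_mem_map.mpr hg.2) hc
    have hP' := hP.of_projBelow he hE
    simp only [List.map_cons, lmul_cons]
    rw [← ih hg.2 hg'.2 hgg'.2, ← hP.2, ← hg.1.mul_mul he hE hP', hgg'.1,
      hg'.1.mul_mul he hE hP']

lemma mul_lmul_map_star {α : Type*} (f : α → X) (l : List α) {s : X} (he : L.IsProj e)
    (hs : L.composable s e) (hf : ∀ z ∈ l, L.ProjBelow e (L.star (f z))) (hc : L.Fixes e c) :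
    L.composable s (L.lmul (l.map fun z => L.star (f z)) c) ∧
      L.mul s (L.lmul (l.map fun z => L.star (f z)) c) =
        L.lmul (l.map fun z => L.star (L.mul s (f z))) (L.mul s c) := by
  induction l with
  | nil =>
    have := (L.assoc₁ _ _ _ hs hc.1).2.1
    exact ⟨by rwa [hc.2] at this, rfl⟩
  | cons z l ih =>
    rw [List.forall_mem_cons] at hf
    obtain ⟨ih₁, ih₂⟩ := ih hf.2
    have hsx : L.composable s (L.star (f z)) := by
      have := (L.assoc₁ _ _ _ hs (hf.1.fixes he).1).2.1
      rwa [(hf.1.fixes he).2] at this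
    have hsf : L.composable s (f z) := by
      have := (L.assoc₁ _ _ _ hsx (L.composable_star_self (f z))).2.1
      rwa [L.star_mul_self] at this
    have hxP := hf.1.composable_of_fixes (fixes_lmul he (List.forall_mem_map.mpr hf.2) hc)
    have ha := L.assoc₁ _ _ _ hsx hxP
    have ha' := L.assoc₁ _ _ _ (L.composable_star_mul_left hsf) ih₁
    refine ⟨ha.2.1, ?_⟩
    simp only [List.map_cons, lmul_cons]
    rw [← ha.2.2, L.lr4 _ _ hsf, ha'.2.2, ih₂]

lemma lmul_map_mul_left {α : Type*} {g : α → X} {l : List α} {u : X} (he : L.IsProj e)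
    (hu : L.ProjBelow e u) (hg : ∀ z ∈ l, L.ProjBelow e (g z)) (hc : L.Fixes e c) :
    L.lmul (l.map fun z => L.mul u (g z)) (L.mul u c) = L.mul u (L.lmul (l.map g) c) := by
  induction l with
  | nil => rfl
  | cons z l ih =>
    rw [List.forall_mem_cons] at hg
    have hP := fixes_lmul he (List.forall_mem_map.mpr hg.2) hc
    simp only [List.map_cons, lmul_cons]
    rw [ih hg.2, hu.mul_mul he hg.1 (hu.fixes_mul he hP), hg.1.mul_left_comm he hu hP,
      ← hu.mul_mul he hu (hg.1.fixes_mul he hP), hu.1.mul_self]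

end ListMul

section FinsetMul

variable (L : LRSgpd X) {α : Type*}

/-- The enumeration `A.toList` is arbitrary; it is harmless because all factors used below are
projections below a common projection (`lmul_eq_of_mem_iff`). -/
noncomputable def fmul (A : Finset α) (g : α → X) (c : X) : X := L.lmul (A.toList.map g) c

@[simp] lemma fmul_empty (g : α → X) (c : X) : L.fmul ∅ g c = c := by
  simp [fmul]

@[simp] lemma fmul_singleton (a : α) (g : α → X) (c : X) : L.fmul {a} g c = L.mul (g a) c := by
  simp [fmul]

variable {L} {e c : X} {A B : Finset α} {g g' : α → X}

lemma fmul_congr (h : ∀ z ∈ A, g z = g' z) : L.fmul A g c = L.fmul A g' c := by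
  rw [fmul, fmul, List.map_congr_left fun z hz => h z (Finset.mem_toList.mp hz)]

lemma fmul_eq_lmul_of_mem_iff {xs : List X} (he : L.IsProj e)
    (hg : ∀ z ∈ A, L.ProjBelow e (g z)) (hc : L.Fixes e c)
    (hxs : ∀ x, x ∈ A.toList.map g ↔ x ∈ xs) : L.fmul A g c = L.lmul xs c :=
  lmul_eq_of_mem_iff he (by simpa using hg) hc hxs

lemma fixes_fmul (he : L.IsProj e) (hg : ∀ z ∈ A, L.ProjBelow e (g z)) (hc : L.Fixes e c) :
    L.Fixes e (L.fmul A g c) :=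
  fixes_lmul he (by simpa using hg) hc

lemma fixes_fmul_of_projBelow {E : X} (he : L.IsProj e) (hE : L.ProjBelow e E)
    (hg : ∀ z ∈ A, L.ProjBelow e (g z)) (hc : L.Fixes E c) : L.Fixes E (L.fmul A g c) :=
  fixes_lmul_of_projBelow he hE (by simpa using hg) hc

lemma fmul_insert [DecidableEq α] {a : α} (he : L.IsProj e)
    (hg : ∀ z ∈ insert a A, L.ProjBelow e (g z)) (hc : L.Fixes e c) :
    L.fmul (insert a A) g c = L.mul (g a) (L.fmul A g c) :=
  fmul_eq_lmul_of_mem_iff (xs := g a :: A.toList.map g) he hg hc fun x => by simp [eq_comm]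

lemma fmul_union [DecidableEq α] (he : L.IsProj e) (hg : ∀ z ∈ A ∪ B, L.ProjBelow e (g z))
    (hc : L.Fixes e c) : L.fmul (A ∪ B) g c = L.fmul A g (L.fmul B g c) := by
  rw [fmul, fmul, fmul, ← lmul_append]
  exact fmul_eq_lmul_of_mem_iff he hg hc fun x => by simp [or_and_right, exists_or]

lemma fmul_image {β : Type*} [DecidableEq β] {f : α → β} {g : β → X} (he : L.IsProj e)
    (hg : ∀ z ∈ A.image f, L.ProjBelow e (g z)) (hc : L.Fixes e c) :
    L.fmul (A.image f) g c = L.fmul A (fun z => g (f z)) c :=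
  fmul_eq_lmul_of_mem_iff he hg hc fun x => by simp

lemma fmul_mul_of_mem {a : α} (he : L.IsProj e) (hg : ∀ z ∈ A, L.ProjBelow e (g z))
    (hc : L.Fixes e c) (ha : a ∈ A) : L.fmul A g (L.mul (g a) c) = L.fmul A g c :=
  lmul_mul_of_mem he (by simpa using hg) hc (by simpa using ⟨a, ha, rfl⟩)

lemma fmul_mul {d : X} (he : L.IsProj e) (hg : ∀ z ∈ A, L.ProjBelow e (g z))
    (hc : L.Fixes e c) (hcd : L.composable c d) :
    L.composable (L.fmul A g c) d ∧ L.mul (L.fmul A g c) d = L.fmul A g (L.mul c d) :=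
  lmul_mul he (by simpa using hg) hc hcd

lemma star_fmul (he : L.IsProj e) (hg : ∀ z ∈ A, L.ProjBelow e (g z)) (hc : L.Fixes e c) :
    L.star (L.fmul A g c) = L.fmul A g (L.star c) :=
  star_lmul he (by simpa using hg) hc

lemma fmul_congr_of_mul_eq {E : X} (he : L.IsProj e) (hE : L.ProjBelow e E)
    (hg : ∀ z ∈ A, L.ProjBelow e (g z)) (hg' : ∀ z ∈ A, L.ProjBelow e (g' z))
    (hgg' : ∀ z ∈ A, L.mul (g z) E = L.mul (g' z) E) (hc : L.Fixes E c) :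
    L.fmul A g c = L.fmul A g' c :=
  lmul_map_congr he hE (by simpa using hg) (by simpa using hg') (by simpa using hgg') hc

lemma mul_fmul_star (f : α → X) {s : X} (he : L.IsProj e) (hs : L.composable s e)
    (hf : ∀ z ∈ A, L.ProjBelow e (L.star (f z))) (hc : L.Fixes e c) :
    L.composable s (L.fmul A (fun z => L.star (f z)) c) ∧
      L.mul s (L.fmul A (fun z => L.star (f z)) c) =
        L.fmul A (fun z => L.star (L.mul s (f z))) (L.mul s c) :=
  mul_lmul_map_star f A.toList he hs (by simpa using hf) hc

lemma fmul_mul_left {u : X} (he : L.IsProj e) (hu : L.ProjBelow e u)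
    (hg : ∀ z ∈ A, L.ProjBelow e (g z)) (hc : L.Fixes e c) :
    L.fmul A (fun z => L.mul u (g z)) (L.mul u c) = L.mul u (L.fmul A g c) :=
  lmul_map_mul_left he hu (by simpa using hg) hc

end FinsetMul

section Szendrei

variable {S : Type*} [DecidableEq S] (L : LRSgpd S) {a : S} {A : Finset S}

lemma image_star_mul_eq_self (hA : ∀ x ∈ A, L.star x = L.star a) :
    A.image (fun x => L.mul (L.star a) x) = A := by
  conv_rhs => rw [← Finset.image_id (s := A)]
  exact Finset.image_congr fun x hx => by rw [id, ← hA x hx, L.star_mul_self]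

lemma szCond_insert_star_insert (hA : ∀ x ∈ A, L.star x = L.star a) :
    szCond L (insert (L.star a) (insert a A)) a := by
  refine ⟨by simp, by simp, ?_⟩
  simpa [L.star_star] using hA

lemma star_eq_of_mem_szSet {B : Finset S} {b : S} (hA : szCond L A a) (hB : szCond L B b)
    (hab : L.composable a b) : ∀ y ∈ szSet L A a B b, L.star y = L.star (L.mul a b) := by
  simp only [szSet, Finset.mem_union, Finset.mem_image]
  rintro y (⟨x, hx, rfl⟩ | ⟨z, hz, rfl⟩)
  · rw [(L.isProj_star _).star_mul
      (L.composable_of_star_eq (L.composable_star_mul_left hab) (hA.2.2 x hx)),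
      hA.2.2 x hx, L.star_mul_mul_star hab]
  · exact L.star_mul_eq_of_star_eq hab (hB.2.2 z hz)

end Szendrei

end LRSgpd

namespace IsPremorphism

open LRSgpd

variable {S T : Type*} {LS : LRSgpd S} {LT : LRSgpd T} {φ : S → T}
  {s t a b : S}

lemma composable_map (hφ : IsPremorphism LS LT φ) (h : LS.composable s t) :
    LT.composable (φ s) (φ t) :=
  (hφ.1 s t h).1

lemma composable_star_map_map_mul (hφ : IsPremorphism LS LT φ) (h : LS.composable s t) :
    LT.composable (LT.star (φ s)) (φ (LS.mul s t)) :=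
  (hφ.1 s t h).2.1

lemma map_mul_map (hφ : IsPremorphism LS LT φ) (h : LS.composable s t) :
    LT.mul (φ s) (φ t) = LT.mul (LT.star (φ s)) (φ (LS.mul s t)) :=
  (hφ.1 s t h).2.2

lemma isProj_map_star (hφ : IsPremorphism LS LT φ) (s : S) : LT.IsProj (φ (LS.star s)) := by
  have h := (hφ.2 (LS.star s)).2
  rw [LS.star_star, LT.star_star, LT.star_mul_self] at h
  exact h.symm

lemma projBelow_star_map (hφ : IsPremorphism LS LT φ) (s : S) :
    LT.ProjBelow (φ (LS.star s)) (LT.star (φ s)) := by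
  have h := hφ.2 s
  rw [natle, LT.star_star] at h
  exact ⟨LT.isProj_star _, h⟩

lemma projBelow_star_map_of_star_eq (hφ : IsPremorphism LS LT φ)
    (h : LS.star s = LS.star a) : LT.ProjBelow (φ (LS.star a)) (LT.star (φ s)) :=
  h ▸ hφ.projBelow_star_map s

lemma fixes_map (hφ : IsPremorphism LS LT φ) (s : S) : LT.Fixes (φ (LS.star s)) (φ s) :=
  Fixes.of_projBelow (hφ.isProj_map_star s) (hφ.projBelow_star_map s)
    ⟨LT.composable_star_self _, LT.star_mul_self _⟩

lemma projBelow_map_star_mul (hφ : IsPremorphism LS LT φ) (h : LS.composable a b) :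
    LT.ProjBelow (φ (LS.star a)) (φ (LS.star (LS.mul a b))) := by
  have hE := hφ.isProj_map_star (LS.mul a b)
  have hc := LS.composable_star_mul_star h
  refine ⟨hE, hφ.composable_map hc, ?_⟩
  rw [hφ.map_mul_map hc, hE, LS.star_mul_mul_star h, hE.mul_self]

lemma projBelow_star_map_of_star_eq_star_mul (hφ : IsPremorphism LS LT φ)
    (h : LS.composable a b) (hs : LS.star s = LS.star (LS.mul a b)) :
    LT.ProjBelow (φ (LS.star a)) (LT.star (φ s)) :=
  (hφ.projBelow_map_star_mul h).trans (hφ.projBelow_star_map_of_star_eq hs)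

lemma star_map_mul_map (hφ : IsPremorphism LS LT φ) (h : LS.composable s t) :
    LT.star (LT.mul (φ s) (φ t)) = LT.mul (LT.star (φ s)) (LT.star (φ (LS.mul s t))) := by
  rw [hφ.map_mul_map h, (LT.isProj_star _).star_mul (hφ.composable_star_map_map_mul h)]

lemma map_star_mul_star_map (hφ : IsPremorphism LS LT φ) (h : LS.composable (LS.star s) t) :
    LT.mul (φ (LS.star s)) (LT.star (φ t)) =
      LT.mul (φ (LS.star s)) (LT.star (φ (LS.mul (LS.star s) t))) := by
  have hE := hφ.isProj_map_star s
  have hc := hφ.composable_star_map_map_mul h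
  rw [hE] at hc
  rw [← hE.star_mul (hφ.composable_map h), ← hE.star_mul hc, hφ.map_mul_map h, hE]

lemma map_mul_fmul (hφ : IsPremorphism LS LT φ) {B : Finset S} (hab : LS.composable a b)
    (hB : ∀ z ∈ B, LS.star z = LS.star b) :
    LT.composable (φ a) (LT.fmul B (fun z => LT.star (φ z)) (φ b)) ∧
      LT.mul (φ a) (LT.fmul B (fun z => LT.star (φ z)) (φ b)) =
        LT.mul (LT.star (φ a))
          (LT.fmul B (fun z => LT.star (φ (LS.mul a z))) (φ (LS.mul a b))) := by
  have hE := hφ.projBelow_map_star_mul hab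
  obtain ⟨h₁, h₂⟩ := mul_fmul_star φ (hφ.isProj_map_star b)
    (hφ.composable_map (LS.composable_star_right hab))
    (fun z hz => hφ.projBelow_star_map_of_star_eq (hB z hz)) (hφ.fixes_map b)
  refine ⟨h₁, ?_⟩
  rw [h₂, fmul_congr fun z hz => hφ.star_map_mul_map (LS.composable_of_star_eq hab (hB z hz)),
    hφ.map_mul_map hab]
  exact fmul_mul_left (hφ.isProj_map_star a) (hφ.projBelow_star_map a)
    (fun z hz => hφ.projBelow_star_map_of_star_eq_star_mul hab
      (LS.star_mul_eq_of_star_eq hab (hB z hz)))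
    (Fixes.of_projBelow (hφ.isProj_map_star a) hE (hφ.fixes_map _))

lemma fmul_mul_fmul [DecidableEq S] (hφ : IsPremorphism LS LT φ) {A B : Finset S}
    (hA : szCond LS A a) (hB : szCond LS B b) (hab : LS.composable a b) :
    LT.composable (LT.fmul A (fun z => LT.star (φ z)) (φ a))
        (LT.fmul B (fun z => LT.star (φ z)) (φ b)) ∧
      LT.mul (LT.fmul A (fun z => LT.star (φ z)) (φ a))
          (LT.fmul B (fun z => LT.star (φ z)) (φ b)) =
        LT.fmul (szSet LS A a B b) (fun z => LT.star (φ z)) (φ (LS.mul a b)) := by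
  set g := fun z => LT.star (φ z)
  set e := φ (LS.star a)
  set E := φ (LS.star (LS.mul a b))
  have he : LT.IsProj e := hφ.isProj_map_star a
  have hE : LT.ProjBelow e E := hφ.projBelow_map_star_mul hab
  have hgA : ∀ z ∈ A, LT.ProjBelow e (g z) :=
    fun z hz => hφ.projBelow_star_map_of_star_eq (hA.2.2 z hz)
  have hgC : ∀ y ∈ szSet LS A a B b, LT.ProjBelow e (g y) :=
    fun y hy => hφ.projBelow_star_map_of_star_eq_star_mul hab
      (LS.star_eq_of_mem_szSet hA hB hab y hy)
  have hgA' : ∀ y ∈ A.image (LS.mul (LS.star (LS.mul a b))), LT.ProjBelow e (g y) :=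
    fun y hy => hgC y (Finset.mem_union_left _ hy)
  have hgB' : ∀ y ∈ B.image (LS.mul a), LT.ProjBelow e (g y) :=
    fun y hy => hgC y (Finset.mem_union_right _ hy)
  have hfix : LT.Fixes E (φ (LS.mul a b)) := hφ.fixes_map _
  have hfix' : LT.Fixes e (φ (LS.mul a b)) := hfix.of_projBelow he hE
  have hY : LT.Fixes E (LT.fmul (B.image (LS.mul a)) g (φ (LS.mul a b))) :=
    fixes_fmul_of_projBelow he hE hgB' hfix
  obtain ⟨hpull, hpull'⟩ := hφ.map_mul_fmul hab hB.2.2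
  obtain ⟨hcomp, hmul⟩ := fmul_mul he hgA (hφ.fixes_map a) hpull
  refine ⟨hcomp, ?_⟩
  calc LT.mul (LT.fmul A g (φ a)) (LT.fmul B g (φ b))
      = LT.fmul A g (LT.mul (g a) (LT.fmul (B.image (LS.mul a)) g (φ (LS.mul a b)))) := by
        rw [hmul, hpull', fmul_image he hgB' hfix']
    _ = LT.fmul A g (LT.fmul (B.image (LS.mul a)) g (φ (LS.mul a b))) :=
        fmul_mul_of_mem he hgA (hY.of_projBelow he hE) hA.1
    _ = LT.fmul A (fun y => g (LS.mul (LS.star (LS.mul a b)) y))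
          (LT.fmul (B.image (LS.mul a)) g (φ (LS.mul a b))) := by
        refine fmul_congr_of_mul_eq he hE hgA (fun y hy => hgA' _ (Finset.mem_image_of_mem _ hy))
          (fun y hy => ?_) hY
        have hy' := LS.composable_of_star_eq (LS.composable_star_mul_left hab) (hA.2.2 y hy)
        rw [(hgA y hy).mul_comm he hE, hφ.map_star_mul_star_map hy',
          (hgA' _ (Finset.mem_image_of_mem _ hy)).mul_comm he hE]
    _ = LT.fmul (szSet LS A a B b) g (φ (LS.mul a b)) := by
        rw [← fmul_image he hgA' (fixes_fmul he hgB' hfix'), ← fmul_union he hgC hfix']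
        rfl

lemma fmul_map_star (hφ : IsPremorphism LS LT φ) {A : Finset S} (hA : szCond LS A a) :
    LT.fmul A (fun z => LT.star (φ z)) (φ (LS.star a)) =
      LT.star (LT.fmul A (fun z => LT.star (φ z)) (φ a)) := by
  have he := hφ.isProj_map_star a
  have hg : ∀ z ∈ A, LT.ProjBelow (φ (LS.star a)) (LT.star (φ z)) :=
    fun z hz => hφ.projBelow_star_map_of_star_eq (hA.2.2 z hz)
  rw [star_fmul he hg (hφ.fixes_map a), ← fmul_mul_of_mem he hg he.fixes_self hA.1,
    (hφ.projBelow_star_map a).2.2]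

lemma fmul_insert_star_singleton [DecidableEq S] (hφ : IsPremorphism LS LT φ) (s : S) :
    LT.fmul (insert (LS.star s) {s}) (fun z => LT.star (φ z)) (φ s) = φ s := by
  have he := hφ.isProj_map_star s
  rw [fmul_insert he ?_ (hφ.fixes_map s), fmul_singleton, LT.star_mul_self, he,
    (hφ.fixes_map s).2]
  simp only [Finset.mem_insert, Finset.mem_singleton, forall_eq_or_imp, forall_eq]
  exact ⟨hφ.projBelow_star_map_of_star_eq (LS.star_star s), hφ.projBelow_star_map s⟩

end IsPremorphism

abbrev Sz {S : Type*} (L : LRSgpd S) := {p : Finset S × S // szCond L p.1 p.2}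

structure IsSzendrei {S : Type*} [DecidableEq S] (LS : LRSgpd S) (LZ : LRSgpd (Sz LS))
    (ι : S → Sz LS) : Prop where
  composable_iff : ∀ p q, LZ.composable p q ↔ LS.composable p.1.2 q.1.2
  mul_val : ∀ p q, LZ.composable p q →
    (LZ.mul p q).1 = (szSet LS p.1.1 p.1.2 q.1.1 q.1.2, LS.mul p.1.2 q.1.2)
  star_val : ∀ p, (LZ.star p).1 = (p.1.1, LS.star p.1.2)
  iota_val : ∀ s, (ι s).1 = (insert (LS.star s) {s}, s)

def szMk {S : Type*} [DecidableEq S] (LS : LRSgpd S) {A : Finset S} {a : S}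
    (hA : ∀ x ∈ A, LS.star x = LS.star a) : Sz LS :=
  ⟨(insert (LS.star a) (insert a A), a), LS.szCond_insert_star_insert hA⟩

lemma eq_szMk {S : Type*} [DecidableEq S] {LS : LRSgpd S} (p : Sz LS) : p = szMk LS p.2.2.2 := by
  obtain ⟨⟨A, a⟩, hA⟩ := p
  apply Subtype.ext
  simp [szMk, Finset.insert_eq_of_mem hA.1, Finset.insert_eq_of_mem hA.2.1]

noncomputable def szLift {S T : Type*} {LS : LRSgpd S} (LT : LRSgpd T) (φ : S → T)
    (p : Sz LS) : T :=
  LT.fmul p.1.1 (fun z => LT.star (φ z)) (φ p.1.2)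

namespace IsSzendrei

open LRSgpd

variable {S T : Type*} [DecidableEq S] {LS : LRSgpd S} {LT : LRSgpd T} {LZ : LRSgpd (Sz LS)}
  {ι : S → Sz LS}

lemma isRestrMorphism_szLift (hZ : IsSzendrei LS LZ ι) {φ : S → T}
    (hφ : IsPremorphism LS LT φ) : IsRestrMorphism LZ LT (szLift LT φ) := by
  refine ⟨fun p q hpq => ?_, fun p => ?_⟩
  · obtain ⟨h₁, h₂⟩ := hφ.fmul_mul_fmul p.2 q.2 ((hZ.composable_iff p q).mp hpq)
    refine ⟨h₁, ?_⟩
    rw [szLift, hZ.mul_val p q hpq]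
    exact h₂.symm
  · rw [szLift, szLift, hZ.star_val]
    exact hφ.fmul_map_star p.2

lemma szLift_comp_iota (hZ : IsSzendrei LS LZ ι) {φ : S → T} (hφ : IsPremorphism LS LT φ) :
    szLift LT φ ∘ ι = φ := by
  funext s
  rw [Function.comp_apply, szLift, hZ.iota_val]
  exact hφ.fmul_insert_star_singleton s

lemma szMk_empty (hZ : IsSzendrei LS LZ ι) (a : S) :
    szMk LS (A := ∅) (a := a) (by simp) = ι a := by
  apply Subtype.ext
  rw [hZ.iota_val]
  simp [szMk]

lemma star_iota_mul_szMk (hZ : IsSzendrei LS LZ ι) {a c : S} {A : Finset S}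
    (hA : ∀ x ∈ insert c A, LS.star x = LS.star a) :
    LZ.composable (LZ.star (ι c)) (szMk LS fun x hx => hA x (Finset.mem_insert_of_mem hx)) ∧
      LZ.mul (LZ.star (ι c)) (szMk LS fun x hx => hA x (Finset.mem_insert_of_mem hx)) =
        szMk LS hA := by
  have hc : LS.star c = LS.star a := hA c (Finset.mem_insert_self c A)
  have hca : LS.mul (LS.star c) a = a := by rw [hc, LS.star_mul_self]
  have hcomp : LZ.composable (LZ.star (ι c))
      (szMk LS fun x hx => hA x (Finset.mem_insert_of_mem hx)) := by
    rw [hZ.composable_iff, hZ.star_val, hZ.iota_val]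
    exact hc ▸ LS.composable_star_self a
  refine ⟨hcomp, Subtype.ext ?_⟩
  rw [hZ.mul_val _ _ hcomp]
  simp only [hZ.star_val, hZ.iota_val, szMk, szSet, hca]
  have hA' : ∀ x ∈ insert (LS.star a) (insert a (insert c A)), LS.star x = LS.star a := by
    simpa [LS.star_star] using hA
  rw [hc, LS.image_star_mul_eq_self fun x hx => hA' x (by simp at hx ⊢; tauto),
    LS.image_star_mul_eq_self fun x hx => hA' x (by simp at hx ⊢; tauto)]
  congr 1
  ext x
  simp only [Finset.mem_union, Finset.mem_insert, Finset.mem_singleton]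
  tauto

theorem restrMorphism_ext (hZ : IsSzendrei LS LZ ι) {ψ₁ ψ₂ : Sz LS → T}
    (h₁ : IsRestrMorphism LZ LT ψ₁) (h₂ : IsRestrMorphism LZ LT ψ₂) (h : ψ₁ ∘ ι = ψ₂ ∘ ι) :
    ψ₁ = ψ₂ := by
  suffices key : ∀ (a : S) (A : Finset S) (hA : ∀ x ∈ A, LS.star x = LS.star a),
      ψ₁ (szMk LS hA) = ψ₂ (szMk LS hA) by
    funext p
    rw [eq_szMk p]
    exact key _ _ _
  intro a A
  induction A using Finset.induction_on with
  | empty =>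
    intro _
    rw [hZ.szMk_empty]
    exact congrFun h a
  | insert c A _ ih =>
    intro hA
    obtain ⟨hcomp, hmul⟩ := hZ.star_iota_mul_szMk hA
    rw [← hmul, (h₁.1 _ _ hcomp).2, (h₂.1 _ _ hcomp).2, h₁.2, h₂.2, ih,
      show ψ₁ (ι c) = ψ₂ (ι c) from congrFun h c]

lemma iota_mul_iota (hZ : IsSzendrei LS LZ ι) {s t : S} (h : LS.composable s t) :
    LZ.composable (ι s) (ι t) ∧ LZ.composable (LZ.star (ι s)) (ι (LS.mul s t)) ∧
      LZ.mul (ι s) (ι t) = LZ.mul (LZ.star (ι s)) (ι (LS.mul s t)) := by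
  have c₁ : LZ.composable (ι s) (ι t) := by
    rw [hZ.composable_iff, hZ.iota_val, hZ.iota_val]
    exact h
  have c₂ : LZ.composable (LZ.star (ι s)) (ι (LS.mul s t)) := by
    rw [hZ.composable_iff, hZ.star_val, hZ.iota_val, hZ.iota_val]
    exact LS.composable_star_mul h
  refine ⟨c₁, c₂, Subtype.ext ?_⟩
  rw [hZ.mul_val _ _ c₁, hZ.mul_val _ _ c₂]
  simp only [hZ.star_val, hZ.iota_val, szSet, Finset.image_insert, Finset.image_singleton,
    LS.star_mul_mul h, LS.star_mul_mul_star h, LS.lr4 s t h, LS.star_mul_star_mul h]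
  congr 1
  ext x
  simp only [Finset.mem_union, Finset.mem_insert, Finset.mem_singleton]
  tauto

lemma star_iota_mul_iota_star (hZ : IsSzendrei LS LZ ι) (s : S) :
    LZ.composable (LZ.star (ι s)) (ι (LS.star s)) ∧
      LZ.mul (LZ.star (ι s)) (ι (LS.star s)) = LZ.star (ι s) := by
  have hc : LZ.composable (LZ.star (ι s)) (ι (LS.star s)) := by
    rw [hZ.composable_iff, hZ.star_val, hZ.iota_val, hZ.iota_val]
    exact LS.composable_star_star s
  refine ⟨hc, Subtype.ext ?_⟩
  rw [hZ.mul_val _ _ hc]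
  simp only [hZ.star_val, hZ.iota_val, szSet, Finset.image_insert, Finset.image_singleton,
    LS.star_star, LS.star_mul_star, LS.star_mul_self]
  congr 1
  ext x
  simp only [Finset.mem_union, Finset.mem_insert, Finset.mem_singleton]
  tauto

lemma isPremorphism_comp_iota (hZ : IsSzendrei LS LZ ι) {ψ : Sz LS → T}
    (hψ : IsRestrMorphism LZ LT ψ) : IsPremorphism LS LT (ψ ∘ ι) := by
  refine ⟨fun s t h => ?_, fun s => ?_⟩
  · obtain ⟨c₁, c₂, heq⟩ := hZ.iota_mul_iota h
    simp only [Function.comp_apply, ← hψ.2]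
    exact ⟨(hψ.1 _ _ c₁).1, (hψ.1 _ _ c₂).1, by rw [← (hψ.1 _ _ c₁).2, heq, (hψ.1 _ _ c₂).2]⟩
  · obtain ⟨hc, heq⟩ := hZ.star_iota_mul_iota_star s
    simp only [natle, Function.comp_apply, ← hψ.2, LZ.star_star]
    exact ⟨(hψ.1 _ _ hc).1, by rw [← (hψ.1 _ _ hc).2, heq]⟩

end IsSzendrei

theorem stmt19 {S T : Type*} [DecidableEq S] (LS : LRSgpd S) (LT : LRSgpd T)
    (LZ : LRSgpd {p : Finset S × S // szCond LS p.1 p.2})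
    (hc : ∀ p q, LZ.composable p q ↔ LS.composable p.1.2 q.1.2)
    (hm : ∀ p q, LZ.composable p q →
      (LZ.mul p q).1 = (szSet LS p.1.1 p.1.2 q.1.1 q.1.2, LS.mul p.1.2 q.1.2))
    (hst : ∀ p, (LZ.star p).1 = (p.1.1, LS.star p.1.2))
    (ι : S → {p : Finset S × S // szCond LS p.1 p.2})
    (hι : ∀ s, (ι s).1 = (insert (LS.star s) {s}, s))
    (φ : S → T) :
    (IsPremorphism LS LT φ →
      ∃! φb, IsRestrMorphism LZ LT φb ∧ φ = φb ∘ ι) ∧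
    (∀ φb, IsRestrMorphism LZ LT φb → IsPremorphism LS LT (φb ∘ ι)) := by
  have hZ : IsSzendrei LS LZ ι := ⟨hc, hm, hst, hι⟩
  refine ⟨fun hφ => ?_, fun φb hφb => hZ.isPremorphism_comp_iota hφb⟩
  have hlift := hZ.isRestrMorphism_szLift hφ
  have hlift_iota := hZ.szLift_comp_iota hφ
  refine ⟨szLift LT φ, ⟨hlift, hlift_iota.symm⟩, fun ψ ⟨hψ, hψι⟩ => ?_⟩
  exact hZ.restrMorphism_ext hψ hlift (hψι.symm.trans hlift_iota.symm)
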